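/- Consider a generations network with generation size K ≥ 2 associated to symmetric observation sets with parameters (d, c) where d ≥ 2 and c ≥ 1, and let β_t denote the common value of the components of the equilibrium weight vectors β_i for agents i in generation t ≥ 2 (well defined by the symmetry of the network). Then β_t ≥ 1/d for every t ≥ 2, and β_t → 1/d as t → ∞. Equivalently, writing Var_t := Σ_j W_i(j)² for i in generation t and Cov_t := Σ_j W_i(j)W_{i′}(j) for distinct i, i′ in generation t, one has β_{t+1} = Var_t/(Var_t + (d−1)·Cov_t) and Var_t / Cov_t → 1 as t → ∞. -/

import Mathlib

open Matrix Finset Filter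

/-- The equilibrium weight vectors of the sequential social-learning model. -/
noncomputable def eqW (Net : ℕ → Finset ℕ) (i : ℕ) : ℕ → ℝ :=
  Nat.strongRecOn i (fun n prev =>
    let nb := (Net n).filter (fun j => j < n)
    if nb.Nonempty then
      let What : Matrix {j // j ∈ nb} (Fin (n - 1)) ℝ :=
        Matrix.of (fun j m => prev j.1 (Finset.mem_filter.mp j.2).2 (m.1 + 1))
      let beta : {j // j ∈ nb} → ℝ :=
        Matrix.vecMul (fun j => ∑ m, What j m) ((What * What.transpose)⁻¹)
      fun m => (if m = n then (1 : ℝ) else 0) +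
        ∑ j : {j // j ∈ nb}, beta j * prev j.1 (Finset.mem_filter.mp j.2).2 m
    else fun m => if m = n then (1 : ℝ) else 0)

/-- The number of signals aggregated by agent `i`: `r_i = Σ_j W_i(j)`. -/
noncomputable def rcount (Net : ℕ → Finset ℕ) (i : ℕ) : ℝ :=
  ∑ j ∈ Finset.range (i + 1), eqW Net i j

/-- The generations network with generation size `K` and observation sets `Ψ`:
`N(i) = ∅` for `1 ≤ i ≤ K`, and `N((t−1)K+k) = {(t−2)K+ψ : ψ ∈ Ψ_k}` for `t ≥ 2`,
`1 ≤ k ≤ K`. -/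
def genNet (K : ℕ) (Ψ : ℕ → Finset ℕ) : ℕ → Finset ℕ := fun i =>
  if i ≤ K then ∅
  else (Ψ ((i - 1) % K + 1)).image (fun ψ => ((i - 1) / K - 1) * K + ψ)

/-- The (filtered) neighborhood used in the equilibrium weight recursion. -/
def nbr (Net : ℕ → Finset ℕ) (i : ℕ) : Finset ℕ := (Net i).filter (fun j => j < i)

/-- The matrix `Ŵ` of agent `i`'s neighbors' weight vectors restricted to
coordinates `1,…,i−1`. -/
noncomputable def hatW (Net : ℕ → Finset ℕ) (i : ℕ) :
    Matrix {j // j ∈ nbr Net i} (Fin (i - 1)) ℝ :=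
  Matrix.of (fun j m => eqW Net j.1 (m.1 + 1))

/-- The equilibrium weight vector `β_i = 𝟙ᵀ Ŵᵀ (ŴŴᵀ)⁻¹` of agent `i` on her
neighbors' log-actions. -/
noncomputable def eqBeta (Net : ℕ → Finset ℕ) (i : ℕ) : {j // j ∈ nbr Net i} → ℝ :=
  Matrix.vecMul (fun j => ∑ m, hatW Net i j m)
    ((hatW Net i * (hatW Net i).transpose)⁻¹)

/-- `Var_t`: the common value of `Σ_j W_i(j)²` over agents `i` of generation `t`
(computed at the agent in position 1). -/
noncomputable def VarT (Net : ℕ → Finset ℕ) (K t : ℕ) : ℝ :=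
  ∑ j ∈ Finset.range (t * K + 1), (eqW Net ((t - 1) * K + 1) j) ^ 2

/-- `Cov_t`: the common value of `Σ_j W_i(j)W_{i′}(j)` over pairs of distinct agents
of generation `t` (computed at the agents in positions 1 and 2). -/
noncomputable def CovT (Net : ℕ → Finset ℕ) (K t : ℕ) : ℝ :=
  ∑ j ∈ Finset.range (t * K + 1),
    eqW Net ((t - 1) * K + 1) j * eqW Net ((t - 1) * K + 2) j

/-!
By induction on the generations: the weight vectors of one generation have Gram matrix
`Var` on the diagonal and `Cov` off it, and each of them has total weight `Var`. Then
`ŴŴᵀ = (Var - Cov) I + Cov J` is positive definite and every neighbor receives the weight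
`β = Var / (Var + (d - 1) Cov)`. Expanding `W' = e + β Σ_{ψ ∈ Ψ k} W_ψ` and counting the
coincidences in `Ψ k × Ψ k'` (`d` of them if `k = k'`, `c` otherwise) gives the next
`(Var, Cov)`. Along this recursion `Var ≥ t`, and the relative gap `x = (Var - Cov) / Var`
satisfies `x' ≤ (1 - c / d) x + 1 / t`, so `x → 0`: `Cov / Var → 1` and `β → 1 / d`.
-/

theorem eqW_eq (Net : ℕ → Finset ℕ) (i : ℕ) :
    eqW Net i = if (nbr Net i).Nonempty then
      fun m => (if m = i then (1 : ℝ) else 0) + ∑ j : nbr Net i, eqBeta Net i j * eqW Net j m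
    else fun m => if m = i then (1 : ℝ) else 0 := by
  rw [eqW, Nat.strongRecOn_eq]
  rfl

theorem eqW_of_nbr_eq_empty {Net : ℕ → Finset ℕ} {i : ℕ} (h : nbr Net i = ∅) :
    eqW Net i = fun m => if m = i then (1 : ℝ) else 0 := by
  rw [eqW_eq, if_neg (by simp [h])]

theorem eqW_apply_of_nbr_nonempty {Net : ℕ → Finset ℕ} {i : ℕ} (h : (nbr Net i).Nonempty)
    (m : ℕ) :
    eqW Net i m =
      (if m = i then (1 : ℝ) else 0) + ∑ j : nbr Net i, eqBeta Net i j * eqW Net j m := by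
  rw [eqW_eq, if_pos h]

theorem eqW_eq_zero_of_lt (Net : ℕ → Finset ℕ) {i m : ℕ} (h : i < m) : eqW Net i m = 0 := by
  induction i using Nat.strong_induction_on with
  | _ i ih =>
    by_cases hne : (nbr Net i).Nonempty
    · rw [eqW_apply_of_nbr_nonempty hne, if_neg h.ne', zero_add]
      refine sum_eq_zero fun j _ => ?_
      have hj : j.1 < i := (mem_filter.mp j.2).2
      rw [ih j hj (hj.trans h), mul_zero]
    · rw [eqW_of_nbr_eq_empty (not_nonempty_iff_eq_empty.mp hne)]
      exact if_neg h.ne'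

theorem sum_ite_eq_sub_add {ι R : Type*} [DecidableEq ι] [CommRing R] (s : Finset ι) (j : ι)
    (A B : R) : ∑ l ∈ s, (if l = j then A else B) = (if j ∈ s then A - B else 0) + #s * B := by
  have h : ∀ l, (if l = j then A else B) = (if l = j then A - B else 0) + B := fun l => by
    split_ifs <;> ring
  simp only [h, sum_add_distrib, sum_ite_eq', sum_const, nsmul_eq_mul]

theorem sum_sum_ite_eq {ι R : Type*} [DecidableEq ι] [CommRing R] (s t : Finset ι) (A B : R) :
    ∑ i ∈ s, ∑ j ∈ t, (if i = j then A else B) = #(s ∩ t) * (A - B) + #s * #t * B := by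
  have h : ∀ i, ∑ j ∈ t, (if i = j then A else B) = (if i ∈ t then A - B else 0) + #t * B :=
    fun i => by simp_rw [eq_comm (a := i)]; exact sum_ite_eq_sub_add t i A B
  simp only [h, sum_add_distrib, sum_ite_mem, sum_const, nsmul_eq_mul, mul_assoc]

theorem sum_fin_pred_eq_sum_range {M : Type*} [AddCommMonoid M] {f : ℕ → M} {i N : ℕ}
    (h0 : f 0 = 0) (hN : N ≤ i) (hf : ∀ m, N ≤ m → f m = 0) :
    ∑ m : Fin (i - 1), f (m + 1) = ∑ m ∈ range N, f m := by
  have hrange : ∑ m ∈ range i, f m = ∑ m ∈ range N, f m :=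
    (sum_subset (range_subset_range.mpr hN) fun m _ hm => hf m (by simpa using hm)).symm
  cases i with
  | zero => simp_all
  | succ n =>
    rw [← hrange, sum_range_succ', h0, add_zero]
    exact Fin.sum_univ_eq_sum_range (fun m => f (m + 1)) n

theorem sum_single_mul_single {α : Type*} [DecidableEq α] {R : Finset α} {i j : α} (hi : i ∈ R) :
    ∑ m ∈ R, (if m = i then (1 : ℝ) else 0) * (if m = j then 1 else 0) =
      if i = j then 1 else 0 := by
  simp only [ite_mul, one_mul, zero_mul, sum_ite_eq', hi, if_true]

theorem sum_single_add_smul_sum_mul {α ι : Type*} [DecidableEq α] {u : ι → α → ℝ}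
    {R : Finset α} {s t : Finset ι} {i j : α} (hi : i ∈ R) (hj : j ∈ R)
    (hui : ∀ ψ ∈ t, u ψ i = 0) (huj : ∀ ψ ∈ s, u ψ j = 0) (β : ℝ) :
    ∑ m ∈ R, ((if m = i then 1 else 0) + β * ∑ ψ ∈ s, u ψ m) *
        ((if m = j then 1 else 0) + β * ∑ ψ ∈ t, u ψ m) =
      (if i = j then 1 else 0) + β ^ 2 * ∑ ψ ∈ s, ∑ ψ' ∈ t, ∑ m ∈ R, u ψ m * u ψ' m := by
  have hexpand : ∀ m, ((if m = i then (1 : ℝ) else 0) + β * ∑ ψ ∈ s, u ψ m) *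
      ((if m = j then 1 else 0) + β * ∑ ψ ∈ t, u ψ m) =
      (if m = i then (1 : ℝ) else 0) * (if m = j then 1 else 0) +
        (if m = i then β * ∑ ψ ∈ t, u ψ m else 0) + (if m = j then β * ∑ ψ ∈ s, u ψ m else 0) +
        β ^ 2 * ∑ ψ ∈ s, ∑ ψ' ∈ t, u ψ m * u ψ' m := fun m => by
    rw [← sum_mul_sum]
    split_ifs <;> ring
  rw [sum_congr rfl fun m _ => hexpand m, sum_add_distrib, sum_add_distrib, sum_add_distrib,
    sum_single_mul_single hi, sum_ite_eq', sum_ite_eq', if_pos hi, if_pos hj,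
    sum_eq_zero hui, sum_eq_zero huj, mul_zero, add_zero, add_zero, ← mul_sum,
    sum_comm]
  simp only [sum_comm (s := R)]

theorem sum_single_add_smul_sum {α ι : Type*} [DecidableEq α] {u : ι → α → ℝ} {R : Finset α}
    {s : Finset ι} {i : α} (hi : i ∈ R) (β : ℝ) :
    ∑ m ∈ R, ((if m = i then 1 else 0) + β * ∑ ψ ∈ s, u ψ m) =
      1 + β * ∑ ψ ∈ s, ∑ m ∈ R, u ψ m := by
  rw [sum_add_distrib, sum_ite_eq', if_pos hi, ← mul_sum, sum_comm]

theorem vecMul_const_inv_of_eq_ite {ι : Type*} [Fintype ι] [DecidableEq ι] {G : Matrix ι ι ℝ}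
    {V C : ℝ} (hG : ∀ i j, G i j = if i = j then V else C) (hC : 0 ≤ C) (hCV : C < V) :
    vecMul (fun _ => V) G⁻¹ = fun _ => V / (V + (Fintype.card ι - 1) * C) := by
  have hG' : G = (V - C) • (1 : Matrix ι ι ℝ) + C • vecMulVec (fun _ => 1) (star fun _ => 1) := by
    ext i j
    rw [hG]
    by_cases h : i = j <;> simp [h, vecMulVec_apply]
  have hunit : IsUnit G.det := by
    rw [← Matrix.isUnit_iff_isUnit_det, hG']
    exact ((PosDef.one.smul (sub_pos.mpr hCV)).add_posSemidef
      ((posSemidef_vecMulVec_self_star _).smul hC)).isUnit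
  have hS : V + (Fintype.card ι - 1) * C ≠ 0 := by
    have : (0 : ℝ) ≤ Fintype.card ι := Nat.cast_nonneg _
    nlinarith
  have hb : vecMul (fun _ => V / (V + (Fintype.card ι - 1) * C)) G = fun _ => V := by
    ext j
    simp only [vecMul, dotProduct, ← mul_sum, hG, sum_ite_eq_sub_add, mem_univ, if_true,
      card_univ]
    field_simp
    ring
  rw [← hb, vecMul_vecMul, mul_nonsing_inv G hunit, vecMul_one]

theorem tendsto_zero_of_le_mul_add {u e : ℕ → ℝ} {l : ℝ} (hu : ∀ n, 0 ≤ u n) (hl0 : 0 ≤ l)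
    (hl1 : l < 1) (he : Tendsto e atTop (nhds 0)) (hrec : ∀ n, u (n + 1) ≤ l * u n + e n) :
    Tendsto u atTop (nhds 0) := by
  rw [Metric.tendsto_atTop]
  intro ε hε
  obtain ⟨N, hN⟩ := eventually_atTop.mp
    (he.eventually (gt_mem_nhds (mul_pos (sub_pos.mpr hl1) (half_pos hε))))
  -- `ε / 2` is the fixed point of `y ↦ l * y + (1 - l) * (ε / 2)`
  have hbound : ∀ m, u (N + m) ≤ l ^ m * u N + ε / 2 := by
    intro m
    induction m with
    | zero => simpa using (half_pos hε).le
    | succ m ih =>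
      calc u (N + (m + 1)) ≤ l * u (N + m) + e (N + m) := hrec (N + m)
        _ ≤ l * (l ^ m * u N + ε / 2) + (1 - l) * (ε / 2) := by
          gcongr
          exact (hN (N + m) (Nat.le_add_right N m)).le
        _ = l ^ (m + 1) * u N + ε / 2 := by ring
  obtain ⟨M, hM⟩ := eventually_atTop.mp
    (((tendsto_pow_atTop_nhds_zero_of_lt_one hl0 hl1).mul_const (u N)).eventually
      (gt_mem_nhds (show 0 * u N < ε / 2 by rw [zero_mul]; exact half_pos hε)))
  refine ⟨N + M, fun n hn => ?_⟩
  obtain ⟨m, rfl⟩ := Nat.exists_eq_add_of_le (le_trans (Nat.le_add_right N M) hn)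
  rw [Real.dist_eq, sub_zero, abs_of_nonneg (hu _)]
  linarith [hbound m, hM m (by omega)]

theorem one_div_le_div_add_mul {d V C : ℝ} (hd : 1 ≤ d) (hC : 0 ≤ C) (hCV : C ≤ V)
    (hV : 0 < V) : 1 / d ≤ V / (V + (d - 1) * C) := by
  rw [div_le_div_iff₀ (by linarith) (by nlinarith)]
  nlinarith

theorem div_add_mul_le_one {d V C : ℝ} (hd : 1 ≤ d) (hC : 0 ≤ C) (hV : 0 < V) :
    V / (V + (d - 1) * C) ≤ 1 :=
  div_le_one_of_le₀ (by nlinarith) (by nlinarith)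

/-- `genVar d c a` and `genCov d c a` are `Var` and `Cov` of generation `a + 1`, and
`genBeta d c a` is the weight `β` of generation `a + 2`. -/
noncomputable def genMoments (d c : ℕ) : ℕ → ℝ × ℝ
  | 0 => (1, 0)
  | a + 1 =>
    let V := (genMoments d c a).1
    let C := (genMoments d c a).2
    let β := V / (V + (d - 1) * C)
    (1 + β ^ 2 * (d * (V - C) + d ^ 2 * C), β ^ 2 * (c * (V - C) + d ^ 2 * C))

noncomputable def genVar (d c a : ℕ) : ℝ := (genMoments d c a).1

noncomputable def genCov (d c a : ℕ) : ℝ := (genMoments d c a).2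

noncomputable def genBeta (d c a : ℕ) : ℝ :=
  genVar d c a / (genVar d c a + (d - 1) * genCov d c a)

section Moments

variable {d c : ℕ}

theorem genVar_zero : genVar d c 0 = 1 := rfl

theorem genCov_zero : genCov d c 0 = 0 := rfl

theorem genVar_succ (a : ℕ) : genVar d c (a + 1) =
    1 + genBeta d c a ^ 2 * (d * (genVar d c a - genCov d c a) + d ^ 2 * genCov d c a) := rfl

theorem genCov_succ (a : ℕ) : genCov d c (a + 1) =
    genBeta d c a ^ 2 * (c * (genVar d c a - genCov d c a) + d ^ 2 * genCov d c a) := rfl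

theorem genVar_sub_genCov_succ (a : ℕ) : genVar d c (a + 1) - genCov d c (a + 1) =
    1 + genBeta d c a ^ 2 * (d - c) * (genVar d c a - genCov d c a) := by
  rw [genVar_succ, genCov_succ]
  ring

theorem genVar_succ_eq_one_add (a : ℕ) (h : genVar d c a + (d - 1) * genCov d c a ≠ 0) :
    genVar d c (a + 1) = 1 + d * genBeta d c a * genVar d c a := by
  rw [genVar_succ, genBeta]
  field_simp
  ring

theorem genMoments_bounds (hd : 1 ≤ d) (hcd : c ≤ d) (a : ℕ) :
    0 ≤ genCov d c a ∧ 1 ≤ genVar d c a - genCov d c a ∧ (a : ℝ) + 1 ≤ genVar d c a := by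
  have hd' : (1 : ℝ) ≤ d := by exact_mod_cast hd
  have hcd' : (c : ℝ) ≤ d := by exact_mod_cast hcd
  induction a with
  | zero => norm_num [genVar_zero, genCov_zero]
  | succ a ih =>
    obtain ⟨hC, hD, hV⟩ := ih
    have hV0 : 0 < genVar d c a := by linarith [a.cast_nonneg (α := ℝ)]
    have hβd := one_div_le_div_add_mul hd' hC (by linarith) hV0
    rw [← genBeta, div_le_iff₀' (by linarith)] at hβd
    refine ⟨?_, ?_, ?_⟩
    · rw [genCov_succ]
      exact mul_nonneg (sq_nonneg _) (add_nonneg (by nlinarith) (mul_nonneg (sq_nonneg _) hC))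
    · rw [genVar_sub_genCov_succ]
      have := mul_nonneg (mul_nonneg (sq_nonneg (genBeta d c a)) (sub_nonneg.mpr hcd'))
        (by linarith : 0 ≤ genVar d c a - genCov d c a)
      linarith
    · rw [genVar_succ_eq_one_add a (by nlinarith)]
      push_cast
      nlinarith

theorem genVar_pos (hd : 1 ≤ d) (hcd : c ≤ d) (a : ℕ) : 0 < genVar d c a := by
  linarith [(genMoments_bounds hd hcd a).2.2, a.cast_nonneg (α := ℝ)]

theorem genVar_add_mul_genCov_pos (hd : 1 ≤ d) (hcd : c ≤ d) (a : ℕ) :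
    0 < genVar d c a + (d - 1) * genCov d c a := by
  have hd' : (0 : ℝ) ≤ d - 1 := by rw [sub_nonneg]; exact_mod_cast hd
  exact add_pos_of_pos_of_nonneg (genVar_pos hd hcd a)
    (mul_nonneg hd' (genMoments_bounds hd hcd a).1)

theorem one_div_le_genBeta (hd : 1 ≤ d) (hcd : c ≤ d) (a : ℕ) : 1 / (d : ℝ) ≤ genBeta d c a :=
  have hb := genMoments_bounds hd hcd a
  one_div_le_div_add_mul (by exact_mod_cast hd) hb.1 (by linarith) (genVar_pos hd hcd a)

theorem genVar_sub_genCov_div_genVar_succ_le (hd : 1 ≤ d) (hcd : c ≤ d) (a : ℕ) :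
    (genVar d c (a + 1) - genCov d c (a + 1)) / genVar d c (a + 1) ≤
      (1 - c / d) * ((genVar d c a - genCov d c a) / genVar d c a) + 1 / ((a : ℝ) + 1) := by
  obtain ⟨hC, hD, -⟩ := genMoments_bounds hd hcd a
  have hV' := (genMoments_bounds hd hcd (a + 1)).2.2
  have hd' : (1 : ℝ) ≤ d := by exact_mod_cast hd
  have hcd' : (c : ℝ) ≤ d := by exact_mod_cast hcd
  have hV0 := genVar_pos hd hcd a
  have hV0' := genVar_pos hd hcd (a + 1)
  have hβ0 : 0 ≤ genBeta d c a := le_trans (by positivity) (one_div_le_genBeta hd hcd a)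
  have hβ1 : genBeta d c a ≤ 1 := div_add_mul_le_one hd' hC hV0
  have hVsucc := genVar_succ_eq_one_add a (genVar_add_mul_genCov_pos hd hcd a).ne'
  calc (genVar d c (a + 1) - genCov d c (a + 1)) / genVar d c (a + 1)
      = genBeta d c a * ((1 - c / d) * ((genVar d c a - genCov d c a) / genVar d c a)) *
          (d * genBeta d c a * genVar d c a / genVar d c (a + 1)) + 1 / genVar d c (a + 1) := by
        rw [genVar_sub_genCov_succ]
        field_simp
        ring
    _ ≤ 1 * ((1 - c / d) * ((genVar d c a - genCov d c a) / genVar d c a)) * 1 +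
          1 / ((a : ℝ) + 1) := by
        have hx : 0 ≤ (1 - c / d) * ((genVar d c a - genCov d c a) / genVar d c a) :=
          mul_nonneg (sub_nonneg.mpr ((div_le_one (by positivity)).mpr hcd'))
            (div_nonneg (by linarith) hV0.le)
        gcongr
        · exact (div_le_one hV0').mpr (by linarith)
        · push_cast at hV'
          linarith
    _ = _ := by ring

theorem tendsto_genCov_div_genVar (hc : 0 < c) (hcd : c ≤ d) :
    Tendsto (fun a => genCov d c a / genVar d c a) atTop (nhds 1) := by
  have hd : 1 ≤ d := hc.trans_le hcd
  have hc' : (0 : ℝ) < c := by exact_mod_cast hc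
  have hd' : (0 : ℝ) < d := by exact_mod_cast hd
  have hgap : Tendsto (fun a => (genVar d c a - genCov d c a) / genVar d c a) atTop (nhds 0) :=
    tendsto_zero_of_le_mul_add
      (fun a => div_nonneg (by linarith [(genMoments_bounds hd hcd a).2.1])
        (genVar_pos hd hcd a).le)
      (sub_nonneg.mpr ((div_le_one hd').mpr (by exact_mod_cast hcd)))
      (sub_lt_self 1 (div_pos hc' hd')) tendsto_one_div_add_atTop_nhds_zero_nat
      (genVar_sub_genCov_div_genVar_succ_le hd hcd)
  have hlim := (tendsto_const_nhds (x := (1 : ℝ))).sub hgap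
  rw [sub_zero] at hlim
  refine hlim.congr fun a => ?_
  rw [sub_div, div_self (genVar_pos hd hcd a).ne']
  ring

theorem tendsto_genBeta (hc : 0 < c) (hcd : c ≤ d) :
    Tendsto (genBeta d c) atTop (nhds (1 / d)) := by
  have hd : 1 ≤ d := hc.trans_le hcd
  have hlim := ((tendsto_genCov_div_genVar hc hcd).const_mul ((d : ℝ) - 1)).const_add 1
  rw [mul_one, add_sub_cancel] at hlim
  rw [one_div]
  refine (hlim.inv₀ (by positivity)).congr fun a => ?_
  have hV := (genVar_pos hd hcd a).ne'
  rw [genBeta]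
  field_simp

theorem tendsto_genVar_div_genCov (hc : 0 < c) (hcd : c ≤ d) :
    Tendsto (fun a => genVar d c a / genCov d c a) atTop (nhds 1) := by
  simpa using (tendsto_genCov_div_genVar hc hcd).inv₀ one_ne_zero

end Moments

section GenerationsNetwork

variable {K d c : ℕ} {Ψ : ℕ → Finset ℕ}

theorem nbr_genNet_of_le {i : ℕ} (h : i ≤ K) : nbr (genNet K Ψ) i = ∅ := by
  simp [nbr, genNet, h]

theorem nbr_genNet_succ_mul_add (hsub : ∀ k ∈ Icc 1 K, Ψ k ⊆ Icc 1 K) (a : ℕ) {k : ℕ}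
    (hk : k ∈ Icc 1 K) :
    nbr (genNet K Ψ) ((a + 1) * K + k) = (Ψ k).map (addLeftEmbedding (a * K)) := by
  obtain ⟨hk1, hkK⟩ := mem_Icc.mp hk
  have hK : 0 < K := by omega
  have hpred : (a + 1) * K + k - 1 = (k - 1) + (a + 1) * K := by omega
  have hmod : ((a + 1) * K + k - 1) % K + 1 = k := by
    rw [hpred, Nat.add_mul_mod_self_right, Nat.mod_eq_of_lt (by omega)]
    omega
  have hdiv : ((a + 1) * K + k - 1) / K - 1 = a := by
    rw [hpred, Nat.add_mul_div_right _ _ hK, Nat.div_eq_of_lt (by omega)]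
    omega
  have hgen : genNet K Ψ ((a + 1) * K + k) = (Ψ k).map (addLeftEmbedding (a * K)) := by
    rw [genNet, if_neg (by nlinarith), hmod, hdiv, map_eq_image]
    rfl
  rw [nbr, hgen, filter_true_of_mem]
  intro j hj
  obtain ⟨ψ, hψ, rfl⟩ := mem_map.mp hj
  have := mem_Icc.mp (hsub k hk hψ)
  simp only [addLeftEmbedding_apply]
  nlinarith

/-- Quantifying over every range `range N` past the support of generation `a + 1` spares
extending the sums from one generation to the next. -/
def HasGenMoments (K d c : ℕ) (Ψ : ℕ → Finset ℕ) (a : ℕ) : Prop :=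
  ∀ k ∈ Icc 1 K, eqW (genNet K Ψ) (a * K + k) 0 = 0 ∧ ∀ N, (a + 1) * K < N →
    ∑ m ∈ range N, eqW (genNet K Ψ) (a * K + k) m = genVar d c a ∧
    ∀ k' ∈ Icc 1 K, ∑ m ∈ range N,
      eqW (genNet K Ψ) (a * K + k) m * eqW (genNet K Ψ) (a * K + k') m =
        if k = k' then genVar d c a else genCov d c a

theorem hasGenMoments_zero : HasGenMoments K d c Ψ 0 := by
  have hW : ∀ k ∈ Icc 1 K, eqW (genNet K Ψ) (0 * K + k) = fun m => if m = k then 1 else 0 :=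
    fun k hk => by
      rw [zero_mul, zero_add]
      exact eqW_of_nbr_eq_empty (nbr_genNet_of_le (mem_Icc.mp hk).2)
  intro k hk
  obtain ⟨hk1, hkK⟩ := mem_Icc.mp hk
  refine ⟨by rw [hW k hk]; exact if_neg (by omega), fun N hN => ?_⟩
  have hkN : k ∈ range N := mem_range.mpr (by omega)
  refine ⟨?_, fun k' hk' => ?_⟩
  · rw [hW k hk, sum_ite_eq', if_pos hkN]
    rfl
  · rw [hW k hk, hW k' hk', sum_single_mul_single hkN]
    rfl

theorem eqBeta_genNet (hsub : ∀ k ∈ Icc 1 K, Ψ k ⊆ Icc 1 K)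
    (hcard : ∀ k ∈ Icc 1 K, #(Ψ k) = d) (hd : 1 ≤ d) (hcd : c ≤ d) {a : ℕ}
    (hmom : HasGenMoments K d c Ψ a) {k : ℕ} (hk : k ∈ Icc 1 K)
    (j : nbr (genNet K Ψ) ((a + 1) * K + k)) :
    eqBeta (genNet K Ψ) ((a + 1) * K + k) j = genBeta d c a := by
  have hnbr := nbr_genNet_succ_mul_add hsub a hk
  have hgen : ∀ j : nbr (genNet K Ψ) ((a + 1) * K + k), ∃ ψ ∈ Icc 1 K, j.1 = a * K + ψ := by
    rintro ⟨j, hj⟩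
    rw [hnbr] at hj
    obtain ⟨ψ, hψ, hj⟩ := Finset.mem_map.mp hj
    exact ⟨ψ, hsub k hk hψ, hj.symm⟩
  have hsum : ∀ (j : nbr (genNet K Ψ) ((a + 1) * K + k)) (g : ℕ → ℝ),
      ∑ m : Fin ((a + 1) * K + k - 1), eqW (genNet K Ψ) j (m + 1) * g (m + 1) =
        ∑ m ∈ range ((a + 1) * K + 1), eqW (genNet K Ψ) j m * g m := by
    intro j g
    obtain ⟨ψ, hψ, hj⟩ := hgen j
    have hψK := (mem_Icc.mp hψ).2
    refine sum_fin_pred_eq_sum_range (f := fun m => eqW (genNet K Ψ) j m * g m) ?_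
      (by have := (mem_Icc.mp hk).1; omega) fun m hm => ?_
    · simp only [hj, (hmom ψ hψ).1, zero_mul]
    · simp only [eqW_eq_zero_of_lt _ (show j.1 < m by nlinarith), zero_mul]
  have hG : ∀ j j', (hatW (genNet K Ψ) ((a + 1) * K + k) *
      (hatW (genNet K Ψ) ((a + 1) * K + k))ᵀ) j j' =
        if j = j' then genVar d c a else genCov d c a := by
    intro j j'
    obtain ⟨ψ, hψ, hj⟩ := hgen j
    obtain ⟨ψ', hψ', hj'⟩ := hgen j'
    simp only [mul_apply, hatW, transpose_apply, of_apply]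
    rw [hsum j (eqW (genNet K Ψ) j'), hj, hj', ((hmom ψ hψ).2 _ (lt_add_one _)).2 ψ' hψ']
    simp only [Subtype.ext_iff, hj, hj', Nat.add_left_cancel_iff]
  have hrow : (fun j => ∑ m, hatW (genNet K Ψ) ((a + 1) * K + k) j m) =
      fun _ => genVar d c a := by
    ext j
    obtain ⟨ψ, hψ, hj⟩ := hgen j
    simpa [hatW, hj, ((hmom ψ hψ).2 _ (lt_add_one _)).1] using hsum j 1
  have hcard' : Fintype.card (nbr (genNet K Ψ) ((a + 1) * K + k)) = d := by
    rw [Fintype.card_coe, hnbr, card_map, hcard k hk]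
  obtain ⟨hC, hD, -⟩ := genMoments_bounds hd hcd a
  rw [eqBeta, hrow, vecMul_const_inv_of_eq_ite hG hC (by linarith), hcard']
  rfl

theorem eqW_genNet_succ_mul_add (hsub : ∀ k ∈ Icc 1 K, Ψ k ⊆ Icc 1 K)
    (hcard : ∀ k ∈ Icc 1 K, #(Ψ k) = d) (hd : 1 ≤ d) (hcd : c ≤ d) {a : ℕ}
    (hmom : HasGenMoments K d c Ψ a) {k : ℕ} (hk : k ∈ Icc 1 K) (m : ℕ) :
    eqW (genNet K Ψ) ((a + 1) * K + k) m = (if m = (a + 1) * K + k then 1 else 0) +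
      genBeta d c a * ∑ ψ ∈ Ψ k, eqW (genNet K Ψ) (a * K + ψ) m := by
  have hnbr := nbr_genNet_succ_mul_add hsub a hk
  have hne : (nbr (genNet K Ψ) ((a + 1) * K + k)).Nonempty := by
    rw [← card_pos, hnbr, card_map, hcard k hk]
    exact hd
  simp only [eqW_apply_of_nbr_nonempty hne, eqBeta_genNet hsub hcard hd hcd hmom hk, ← mul_sum]
  rw [sum_coe_sort (nbr (genNet K Ψ) ((a + 1) * K + k)) (fun j => eqW (genNet K Ψ) j m), hnbr,
    sum_map]
  rfl

theorem hasGenMoments_succ (hsub : ∀ k ∈ Icc 1 K, Ψ k ⊆ Icc 1 K)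
    (hcard : ∀ k ∈ Icc 1 K, #(Ψ k) = d)
    (hinter : ∀ k₁ ∈ Icc 1 K, ∀ k₂ ∈ Icc 1 K, k₁ ≠ k₂ → #(Ψ k₁ ∩ Ψ k₂) = c)
    (hd : 1 ≤ d) (hcd : c ≤ d) {a : ℕ} (hmom : HasGenMoments K d c Ψ a) :
    HasGenMoments K d c Ψ (a + 1) := by
  have hW := fun k hk => eqW_genNet_succ_mul_add hsub hcard hd hcd hmom (k := k) hk
  have hvanish : ∀ k ∈ Icc 1 K, ∀ k' ∈ Icc 1 K, ∀ ψ ∈ Ψ k,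
      eqW (genNet K Ψ) (a * K + ψ) ((a + 1) * K + k') = 0 := fun k hk k' hk' ψ hψ => by
    have := mem_Icc.mp (hsub k hk hψ)
    have := mem_Icc.mp hk'
    exact eqW_eq_zero_of_lt _ (by nlinarith)
  intro k hk
  obtain ⟨hk1, hkK⟩ := mem_Icc.mp hk
  refine ⟨?_, fun N hN => ?_⟩
  · rw [hW k hk, if_neg (by omega), sum_eq_zero fun ψ hψ => (hmom ψ (hsub k hk hψ)).1,
      mul_zero, add_zero]
  have hold := fun ψ hψ => (hmom ψ hψ).2 N (by nlinarith)
  have hR : ∀ k' ∈ Icc 1 K, (a + 1) * K + k' ∈ range N := fun k' hk' => by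
    have := mem_Icc.mp hk'
    exact mem_range.mpr (by nlinarith)
  refine ⟨?_, fun k' hk' => ?_⟩
  · simp only [hW k hk]
    rw [sum_single_add_smul_sum (hR k hk), sum_congr rfl fun ψ hψ => (hold ψ (hsub k hk hψ)).1,
      sum_const, hcard k hk, nsmul_eq_mul,
      genVar_succ_eq_one_add a (genVar_add_mul_genCov_pos hd hcd a).ne']
    ring
  · simp only [hW k hk, hW k' hk']
    rw [sum_single_add_smul_sum_mul (hR k hk) (hR k' hk') (hvanish k' hk' k hk)
        (hvanish k hk k' hk'),
      sum_congr rfl fun ψ hψ => sum_congr rfl fun ψ' hψ' =>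
        (hold ψ (hsub k hk hψ)).2 ψ' (hsub k' hk' hψ'),
      sum_sum_ite_eq, hcard k hk, hcard k' hk']
    by_cases hkk : k = k'
    · subst hkk
      rw [if_pos rfl, if_pos rfl, inter_self, hcard k hk, genVar_succ]
      ring
    · rw [if_neg (by omega), if_neg hkk, hinter k hk k' hk' hkk, genCov_succ]
      ring

theorem hasGenMoments_genNet (hsub : ∀ k ∈ Icc 1 K, Ψ k ⊆ Icc 1 K)
    (hcard : ∀ k ∈ Icc 1 K, #(Ψ k) = d)
    (hinter : ∀ k₁ ∈ Icc 1 K, ∀ k₂ ∈ Icc 1 K, k₁ ≠ k₂ → #(Ψ k₁ ∩ Ψ k₂) = c)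
    (hd : 1 ≤ d) (hcd : c ≤ d) (a : ℕ) : HasGenMoments K d c Ψ a := by
  induction a with
  | zero => exact hasGenMoments_zero
  | succ a ih => exact hasGenMoments_succ hsub hcard hinter hd hcd ih

theorem varT_genNet {a : ℕ} (hmom : HasGenMoments K d c Ψ a) (hK : 1 ≤ K) :
    VarT (genNet K Ψ) K (a + 1) = genVar d c a := by
  have h1 : 1 ∈ Icc 1 K := mem_Icc.mpr ⟨le_rfl, hK⟩
  simp only [VarT, Nat.add_sub_cancel, sq, ((hmom 1 h1).2 _ (lt_add_one _)).2 1 h1, if_true]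

theorem covT_genNet {a : ℕ} (hmom : HasGenMoments K d c Ψ a) (hK : 2 ≤ K) :
    CovT (genNet K Ψ) K (a + 1) = genCov d c a := by
  simp only [CovT, Nat.add_sub_cancel, ((hmom 1 (mem_Icc.mpr ⟨le_rfl, by omega⟩)).2 _
    (lt_add_one _)).2 2 (mem_Icc.mpr ⟨by omega, hK⟩), if_neg (by norm_num : (1 : ℕ) ≠ 2)]

end GenerationsNetwork

theorem beta_tends_to_inverse_degree_general (K d c : ℕ) (hK : 2 ≤ K)
    (hc : 1 ≤ c) (Ψ : ℕ → Finset ℕ)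
    (hsub : ∀ k ∈ Finset.Icc 1 K, Ψ k ⊆ Finset.Icc 1 K)
    (hcard : ∀ k ∈ Finset.Icc 1 K, (Ψ k).card = d)
    (hinter : ∀ k₁ ∈ Finset.Icc 1 K, ∀ k₂ ∈ Finset.Icc 1 K, k₁ ≠ k₂ →
      ((Ψ k₁) ∩ (Ψ k₂)).card = c) :
    ∃ βs : ℕ → ℝ,
      (∀ t : ℕ, 2 ≤ t → ∀ k ∈ Finset.Icc 1 K,
        ∀ j (hj : j ∈ nbr (genNet K Ψ) ((t - 1) * K + k)),
          eqBeta (genNet K Ψ) ((t - 1) * K + k) ⟨j, hj⟩ = βs t) ∧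
      (∀ t : ℕ, 2 ≤ t → 1 / (d : ℝ) ≤ βs t) ∧
      Tendsto βs atTop (nhds (1 / (d : ℝ))) ∧
      (∀ t : ℕ, 1 ≤ t →
        βs (t + 1) = VarT (genNet K Ψ) K t
          / (VarT (genNet K Ψ) K t + ((d : ℝ) - 1) * CovT (genNet K Ψ) K t)) ∧
      Tendsto (fun t : ℕ => VarT (genNet K Ψ) K t / CovT (genNet K Ψ) K t)
        atTop (nhds 1) := by
  have h1 : 1 ∈ Icc 1 K := mem_Icc.mpr ⟨le_rfl, by omega⟩
  have h2 : 2 ∈ Icc 1 K := mem_Icc.mpr ⟨by omega, hK⟩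
  have hcd : c ≤ d := by
    rw [← hinter 1 h1 2 h2 (by norm_num), ← hcard 1 h1]
    exact card_le_card inter_subset_left
  have hd : 1 ≤ d := hc.trans hcd
  have hmom := hasGenMoments_genNet hsub hcard hinter hd hcd
  have hVC : ∀ t, 1 ≤ t → VarT (genNet K Ψ) K t / CovT (genNet K Ψ) K t =
      genVar d c (t - 1) / genCov d c (t - 1) := fun t ht => by
    obtain ⟨a, rfl⟩ := Nat.exists_eq_add_of_le' ht
    rw [varT_genNet (hmom a) (by omega), covT_genNet (hmom a) hK, Nat.add_sub_cancel]
  refine ⟨fun t => genBeta d c (t - 2), fun t ht k hk j hj => ?_,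
    fun t _ => one_div_le_genBeta hd hcd _,
    (tendsto_genBeta hc hcd).comp (tendsto_sub_atTop_nat 2), fun t ht => ?_,
    ((tendsto_genVar_div_genCov hc hcd).comp (tendsto_sub_atTop_nat 1)).congr'
      (eventually_atTop.mpr ⟨1, fun t ht => (hVC t ht).symm⟩)⟩
  · obtain ⟨a, rfl⟩ := Nat.exists_eq_add_of_le' ht
    exact eqBeta_genNet hsub hcard hd hcd (hmom a) hk ⟨j, hj⟩
  · obtain ⟨a, rfl⟩ := Nat.exists_eq_add_of_le' ht
    rw [varT_genNet (hmom a) (by omega), covT_genNet (hmom a) hK]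
    rfl

/-- In a generations network with generation size `K ≥ 2`
associated to symmetric observation sets with parameters `(d, c)`, `d ≥ 2`,
`c ≥ 1`, the common neighbor-weight `β_t` of generation `t ≥ 2` satisfies
`β_t ≥ 1/d` and `β_t → 1/d`; equivalently
`β_{t+1} = Var_t/(Var_t + (d−1)Cov_t)` and `Var_t/Cov_t → 1`. -/
theorem beta_tends_to_inverse_degree (K d c : ℕ) (hK : 2 ≤ K) (hd : 2 ≤ d)
    (hc : 1 ≤ c) (Ψ : ℕ → Finset ℕ)
    (hsub : ∀ k ∈ Finset.Icc 1 K, Ψ k ⊆ Finset.Icc 1 K)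
    (hcard : ∀ k ∈ Finset.Icc 1 K, (Ψ k).card = d)
    (hinter : ∀ k₁ ∈ Finset.Icc 1 K, ∀ k₂ ∈ Finset.Icc 1 K, k₁ ≠ k₂ →
      ((Ψ k₁) ∩ (Ψ k₂)).card = c) :
    ∃ βs : ℕ → ℝ,
      (∀ t : ℕ, 2 ≤ t → ∀ k ∈ Finset.Icc 1 K,
        ∀ j (hj : j ∈ nbr (genNet K Ψ) ((t - 1) * K + k)),
          eqBeta (genNet K Ψ) ((t - 1) * K + k) ⟨j, hj⟩ = βs t) ∧
      (∀ t : ℕ, 2 ≤ t → 1 / (d : ℝ) ≤ βs t) ∧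
      Tendsto βs atTop (nhds (1 / (d : ℝ))) ∧
      (∀ t : ℕ, 1 ≤ t →
        βs (t + 1) = VarT (genNet K Ψ) K t
          / (VarT (genNet K Ψ) K t + ((d : ℝ) - 1) * CovT (genNet K Ψ) K t)) ∧
      Tendsto (fun t : ℕ => VarT (genNet K Ψ) K t / CovT (genNet K Ψ) K t)
        atTop (nhds 1) :=
  beta_tends_to_inverse_degree_general K d c hK hc Ψ hsub hcard hinter
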